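/- Let A be a D×n complex matrix (D, n positive integers) all of whose columns have unit Euclidean norm, and let μ be its mutual incoherence. Then for every integer s ≥ 1 and every vector X ∈ ℂ^n with at most s nonzero entries, max(0, 1 − μ·(s−1)) · ‖X‖² ≤ ‖A X‖² ≤ (1 + μ·(s−1)) · ‖X‖², where ‖·‖ denotes the Euclidean norm. -/

import Mathlib

/-!
With unit columns `a p`, the expansion `‖A X‖² = ∑_{j,k} conj (X j) X k ⟪a j, a k⟫` has diagonal
part `‖X‖²`, and every off-diagonal Gram entry is bounded by `μ`, so the deviation of `‖A X‖²`
from `‖X‖²` is at most `μ ((∑ |X j|)² - ‖X‖²)`. For `s`-sparse `X`, Cauchy–Schwarz on the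
support gives `(∑ |X j|)² ≤ s ‖X‖²`.
-/

open scoped BigOperators

noncomputable def mutualIncoherence {D n : ℕ} (A : Matrix (Fin D) (Fin n) ℂ) : ℝ :=
  sSup {x : ℝ | ∃ p q : Fin n, p ≠ q ∧
    x = ‖∑ i, (starRingEnd ℂ) (A i p) * A i q‖ /
      (Real.sqrt (∑ i, ‖A i p‖ ^ 2) * Real.sqrt (∑ i, ‖A i q‖ ^ 2))}

open Finset ComplexConjugate RCLike
open scoped InnerProductSpace

lemma sum_sum_erase_mul_eq_sq_sub_sum_sq {ι R : Type*} [Fintype ι] [DecidableEq ι] [CommRing R]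
    (a : ι → R) : ∑ j, ∑ k ∈ univ.erase j, a j * a k = (∑ j, a j) ^ 2 - ∑ j, a j ^ 2 := by
  simp_rw [← mul_sum, sum_erase_eq_sub (mem_univ _), mul_sub, sum_sub_distrib, ← sum_mul, sq]

lemma sq_sum_norm_le_card_support_mul {ι E : Type*} [Fintype ι] [NormedAddCommGroup E]
    [DecidableEq E] (x : ι → E) :
    (∑ j, ‖x j‖) ^ 2 ≤ #{j | x j ≠ 0} * ∑ j, ‖x j‖ ^ 2 := by
  rw [← sum_filter_of_ne fun j _ h => norm_ne_zero_iff.mp h]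
  calc _ ≤ #{j | x j ≠ 0} * ∑ j with x j ≠ 0, ‖x j‖ ^ 2 := sq_sum_le_card_mul_sum_sq
    _ ≤ _ := by
      gcongr
      exact subset_univ _

section GramExpansion

variable {𝕜 E ι : Type*} [RCLike 𝕜] [NormedAddCommGroup E] [InnerProductSpace 𝕜 E]
  [Fintype ι]

lemma inner_sum_smul_sum_smul (v : ι → E) (x : ι → 𝕜) :
    ⟪∑ j, x j • v j, ∑ k, x k • v k⟫_𝕜 = ∑ j, ∑ k, conj (x j) * x k * ⟪v j, v k⟫_𝕜 := by
  simp_rw [sum_inner, inner_sum, inner_smul_left, inner_smul_right, mul_assoc]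

variable [DecidableEq ι] {v : ι → E}

lemma norm_sum_smul_sq_of_norm_eq_one (hv : ∀ p, ‖v p‖ = 1) (x : ι → 𝕜) :
    ‖∑ j, x j • v j‖ ^ 2 =
      ∑ j, ‖x j‖ ^ 2 + re (∑ j, ∑ k ∈ univ.erase j, conj (x j) * x k * ⟪v j, v k⟫_𝕜) := by
  have hdiag : ∀ j, conj (x j) * x j * ⟪v j, v j⟫_𝕜 = ((‖x j‖ ^ 2 : ℝ) : 𝕜) := fun j => by
    rw [inner_self_eq_norm_sq_to_K, hv, RCLike.conj_mul]
    simp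
  rw [norm_sq_eq_re_inner (𝕜 := 𝕜), inner_sum_smul_sum_smul,
    sum_congr rfl fun j _ => (add_sum_erase _ _ (mem_univ j)).symm]
  simp_rw [hdiag, sum_add_distrib, map_add, ← ofReal_sum, ofReal_re]

lemma abs_norm_sum_smul_sq_sub_le (hv : ∀ p, ‖v p‖ = 1) {μ : ℝ}
    (hμ : ∀ p q, p ≠ q → ‖⟪v p, v q⟫_𝕜‖ ≤ μ) (x : ι → 𝕜) :
    |‖∑ j, x j • v j‖ ^ 2 - ∑ j, ‖x j‖ ^ 2| ≤ μ * ((∑ j, ‖x j‖) ^ 2 - ∑ j, ‖x j‖ ^ 2) := by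
  rw [norm_sum_smul_sq_of_norm_eq_one hv, add_sub_cancel_left,
    ← sum_sum_erase_mul_eq_sq_sub_sum_sq, mul_sum]
  refine (abs_re_le_norm _).trans <| (norm_sum_le _ _).trans <| sum_le_sum fun j _ => ?_
  rw [mul_sum]
  refine (norm_sum_le _ _).trans <| sum_le_sum fun k hk => ?_
  rw [norm_mul, norm_mul, norm_conj, mul_comm μ]
  exact mul_le_mul_of_nonneg_left (hμ j k (ne_of_mem_erase hk).symm) (by positivity)

lemma abs_norm_sum_smul_sq_sub_le_of_card_support_le [DecidableEq 𝕜] (hv : ∀ p, ‖v p‖ = 1)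
    {μ : ℝ} (hμ₀ : 0 ≤ μ) (hμ : ∀ p q, p ≠ q → ‖⟪v p, v q⟫_𝕜‖ ≤ μ) {s : ℕ} {x : ι → 𝕜}
    (hx : #{j | x j ≠ 0} ≤ s) :
    |‖∑ j, x j • v j‖ ^ 2 - ∑ j, ‖x j‖ ^ 2| ≤ μ * (s - 1) * ∑ j, ‖x j‖ ^ 2 := by
  have hsq : (∑ j, ‖x j‖) ^ 2 ≤ s * ∑ j, ‖x j‖ ^ 2 :=
    (sq_sum_norm_le_card_support_mul x).trans (by gcongr)
  calc _ ≤ μ * ((∑ j, ‖x j‖) ^ 2 - ∑ j, ‖x j‖ ^ 2) := abs_norm_sum_smul_sq_sub_le hv hμ x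
    _ ≤ μ * (s * ∑ j, ‖x j‖ ^ 2 - ∑ j, ‖x j‖ ^ 2) := by gcongr
    _ = _ := by ring

end GramExpansion

namespace Matrix

variable {m n 𝕜 : Type*} [RCLike 𝕜] [Fintype m]

noncomputable def euclideanCol (A : Matrix m n 𝕜) (p : n) : EuclideanSpace 𝕜 m :=
  WithLp.toLp 2 (A.col p)

lemma norm_euclideanCol (A : Matrix m n 𝕜) (p : n) :
    ‖A.euclideanCol p‖ = √(∑ i, ‖A i p‖ ^ 2) :=
  EuclideanSpace.norm_eq _

lemma inner_euclideanCol (A : Matrix m n 𝕜) (p q : n) :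
    ⟪A.euclideanCol p, A.euclideanCol q⟫_𝕜 = ∑ i, conj (A i p) * A i q := by
  simp [euclideanCol, PiLp.inner_apply, mul_comm]

lemma sum_norm_mulVec_sq [Fintype n] (A : Matrix m n 𝕜) (x : n → 𝕜) :
    ∑ i, ‖(A *ᵥ x) i‖ ^ 2 = ‖∑ j, x j • A.euclideanCol j‖ ^ 2 := by
  rw [EuclideanSpace.norm_sq_eq, mulVec_eq_sum]
  simp [euclideanCol, ← WithLp.toLp_sum]

end Matrix

open Matrix

lemma mutualIncoherence_nonneg {D n : ℕ} (A : Matrix (Fin D) (Fin n) ℂ) :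
    0 ≤ mutualIncoherence A :=
  Real.sSup_nonneg <| by rintro _ ⟨p, q, -, rfl⟩; positivity

lemma norm_inner_euclideanCol_div_le_mutualIncoherence {D n : ℕ} (A : Matrix (Fin D) (Fin n) ℂ)
    {p q : Fin n} (hpq : p ≠ q) :
    ‖⟪A.euclideanCol p, A.euclideanCol q⟫_ℂ‖ / (‖A.euclideanCol p‖ * ‖A.euclideanCol q‖) ≤
      mutualIncoherence A := by
  rw [inner_euclideanCol, norm_euclideanCol, norm_euclideanCol]
  refine le_csSup (Set.Finite.bddAbove ?_) ⟨p, q, hpq, rfl⟩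
  refine (Set.finite_range fun pq : Fin n × Fin n => ‖∑ i, conj (A i pq.1) * A i pq.2‖ /
    (√(∑ i, ‖A i pq.1‖ ^ 2) * √(∑ i, ‖A i pq.2‖ ^ 2))).subset ?_
  rintro _ ⟨p, q, -, rfl⟩
  exact ⟨(p, q), rfl⟩

theorem rip_of_mutualIncoherence {D n : ℕ}
    (A : Matrix (Fin D) (Fin n) ℂ)
    (hcol : ∀ p : Fin n, ∑ i, ‖A i p‖ ^ 2 = 1)
    (μ : ℝ) (hμ : μ = mutualIncoherence A)
    (s : ℕ)
    (X : Fin n → ℂ) (hX : (Finset.univ.filter fun j => X j ≠ 0).card ≤ s) :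
    max 0 (1 - μ * ((s : ℝ) - 1)) * ∑ j, ‖X j‖ ^ 2 ≤ ∑ i, ‖A.mulVec X i‖ ^ 2 ∧
      ∑ i, ‖A.mulVec X i‖ ^ 2 ≤ (1 + μ * ((s : ℝ) - 1)) * ∑ j, ‖X j‖ ^ 2 := by
  subst hμ
  have hunit : ∀ p, ‖A.euclideanCol p‖ = 1 := fun p => by
    rw [norm_euclideanCol, hcol, Real.sqrt_one]
  have hinc : ∀ p q, p ≠ q → ‖⟪A.euclideanCol p, A.euclideanCol q⟫_ℂ‖ ≤ mutualIncoherence A :=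
    fun p q hpq => by
      simpa [hunit] using norm_inner_euclideanCol_div_le_mutualIncoherence A hpq
  have hdev := abs_le.mp <| abs_norm_sum_smul_sq_sub_le_of_card_support_le hunit
    (mutualIncoherence_nonneg A) hinc hX
  have hX₀ : 0 ≤ ∑ j, ‖X j‖ ^ 2 := by positivity
  rw [sum_norm_mulVec_sq, max_mul_of_nonneg _ _ hX₀]
  exact ⟨max_le (by rw [zero_mul]; positivity) (by linarith), by linarith⟩
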